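/- arXiv:2305.09465 — 3 statements merged into one kernel-verified Lean document; each statement's English description precedes it below -/
import Mathlib

section
/- For every natural number N there exists a vertex-transitive graph X with more than N vertices such that no subgroup of the automorphism group of X acts regularly on the vertex set (i.e., X is not a Cayley graph) and the Hamilton compression of X equals 1. (In particular, there exist infinitely many non-Cayley vertex-transitive graphs with Hamilton compression equal to 1.) -/
open SimpleGraph

/-- The automorphism group of a simple graph, as a subgroup of the permutation group
of the vertex set. -/
def autSubgroup {V : Type*} (X : SimpleGraph V) : Subgroup (Equiv.Perm V) where
  carrier := {π | ∀ u v : V, X.Adj (π u) (π v) ↔ X.Adj u v}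
  one_mem' := fun u v => Iff.rfl
  mul_mem' := fun {a b} ha hb u v => (ha (b u) (b v)).trans (hb u v)
  inv_mem' := fun {a} ha u v => by simpa using (ha (a⁻¹ u) (a⁻¹ v)).symm

/-- `c` is a Hamilton cycle of `X`, presented as a cyclic enumeration
`v_0, v_1, …, v_{N-1}` of the vertices (indices modulo `N = |V|`) with consecutive
vertices adjacent. -/
def IsHamCycle {V : Type*} [Fintype V] (X : SimpleGraph V)
    (c : ZMod (Fintype.card V) → V) : Prop :=
  Function.Bijective c ∧ ∀ i, X.Adj (c i) (c (i + 1))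

/-- The Hamilton cycle `c` of `X` is `k`-symmetric: `k ∣ N` and some automorphism `α`
of `X` satisfies `α (v_i) = v_{i + N/k}` for all `i`. -/
def IsSymmHamCycle {V : Type*} [Fintype V] (X : SimpleGraph V)
    (c : ZMod (Fintype.card V) → V) (k : ℕ) : Prop :=
  k ∣ Fintype.card V ∧
    ∃ α ∈ autSubgroup X, ∀ i, α (c i) = c (i + (Fintype.card V / k : ℕ))

/-- The Hamilton compression `κ(X)` of a graph `X`: the largest `k` such that some
Hamilton cycle of `X` is `k`-symmetric (and `0` if `X` has no Hamilton cycle). -/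
noncomputable def hamiltonCompression {V : Type*} [Fintype V] (X : SimpleGraph V) : ℕ :=
  sSup {k | ∃ c, IsHamCycle X c ∧ IsSymmHamCycle X c k}

/-- The metacirculant graph `X(m,n;r)` on vertex set `ℤ/m × ℤ/n`: vertex `(i,j)` is
adjacent to `(i, j ± r^i)` and `(i ± 1, j)`. -/
def metaGraph (m n : ℕ) (r : (ZMod n)ˣ) : SimpleGraph (ZMod m × ZMod n) :=
  SimpleGraph.fromRel (fun u v =>
    (u.1 = v.1 ∧ v.2 = u.2 + (r : ZMod n) ^ u.1.val) ∨ (u.2 = v.2 ∧ v.1 = u.1 + 1))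

/-!
Take a prime `p ≡ 1 (mod 4)` and `r` with `r ^ 2 = -1` in `ZMod p`. The graph lives on
`ZMod 2 × ZMod p`: layer `0` is the circulant with jumps `±1, ±2`, layer `1` the circulant with
jumps `±r, ±2r`, and `(0, x)` is joined to `(1, x)`.

A spoke `(0, x)(1, x)` lies in no triangle, an edge of jump `±2` (or `±2r`) in one and an edge of
jump `±1` (or `±r`) in two. Hence automorphisms map spokes to spokes and jump-`±1` edges to
jump-`±1` edges, which forces them to be `(s, x) ↦ (s + t, b ± rᵗ x)`: translations
`x ↦ x + c`, reflections `x ↦ b - x`, or layer swaps whose square is a reflection. The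
translations and `(s, x) ↦ (s + 1, r x)` act transitively, but every involution fixes a vertex,
so no subgroup of order `2p` is regular. A `k`-symmetric Hamilton cycle with `k ∈ {2, p, 2p}`
would need a fixed-point-free involution, an automorphism of order `2p`, or a translation
`v_i ↦ v_{i+2}`. The last is impossible: `v_1`, adjacent to `v_0` and `v_2 = v_0 + c`, cannot
reach both by spokes, so it lies in their layer, which the `v_{2n}` already exhaust.
-/

open Equiv Function

lemma ZMod.forall_of_add_one {n : ℕ} [NeZero n] {P : ZMod n → Prop} (h0 : P 0)
    (hs : ∀ x, P x → P (x + 1)) (x : ZMod n) : P x := by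
  obtain ⟨m, rfl⟩ := ZMod.natCast_zmod_surjective x
  induction m with
  | zero => simpa using h0
  | succ m ih => simpa using hs _ ih

lemma ZMod.exists_sign_of_injective {n : ℕ} [NeZero n] (h2 : (2 : ZMod n) ≠ 0)
    {β : ZMod n → ZMod n} (hβ : Injective β) {e : ZMod n}
    (hstep : ∀ x, ∃ ε ∈ ({1, -1} : Finset ℤ), β (x + 1) = β x + ε * e) :
    ∃ ε ∈ ({1, -1} : Finset ℤ), ∀ x, β x = β 0 + ε * e * x := by
  obtain ⟨ε, hε, h0⟩ := hstep 0
  have hconst : ∀ x, β (x + 1) = β x + ε * e := by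
    refine ZMod.forall_of_add_one (by simpa using h0) fun x hx => ?_
    obtain ⟨ε', hε', hx'⟩ := hstep (x + 1)
    rcases eq_or_ne ε' ε with rfl | hne
    · exact hx'
    have hneg : ε' = -ε := by
      simp only [Finset.mem_insert, Finset.mem_singleton] at hε hε'
      omega
    have := hβ (show β (x + 1 + 1) = β x by rw [hx', hx, hneg]; push_cast; ring)
    exact absurd (by linear_combination this) h2
  refine ⟨ε, hε, ZMod.forall_of_add_one (by simp) fun x hx => ?_⟩
  rw [hconst, hx]
  ring

lemma ZMod.eq_zero_of_intCast_mul_eq_zero {p : ℕ} [Fact p.Prime] {a : ℤ} {e : ZMod p}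
    (he : e ≠ 0) (ha : a.natAbs < p) (h : (a : ZMod p) * e = 0) : a = 0 := by
  refine Int.eq_zero_of_abs_lt_dvd ((ZMod.intCast_zmod_eq_zero_iff_dvd a p).1
    ((mul_eq_zero.1 h).resolve_right he)) ?_
  rw [Int.abs_eq_natAbs]
  exact_mod_cast ha

lemma ZMod.two_ne_zero_of_lt {p : ℕ} (hp : 2 < p) : (2 : ZMod p) ≠ 0 := fun h =>
  absurd (Nat.le_of_dvd two_pos ((ZMod.natCast_eq_zero_iff 2 p).1 (mod_cast h))) (by omega)

lemma ZMod.natCast_injOn (n : ℕ) : Set.InjOn (Nat.cast : ℕ → ZMod n) (Set.Iio n) :=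
  fun a ha b hb h => by
    simpa [ZMod.val_cast_of_lt ha, ZMod.val_cast_of_lt hb] using congrArg ZMod.val h

lemma ZMod.natCast_mul_div_eq_zero_iff {N k : ℕ} (hk : k ∣ N) (hN : 0 < N) (j : ℕ) :
    ((j * (N / k) : ℕ) : ZMod N) = 0 ↔ k ∣ j := by
  obtain ⟨m, rfl⟩ := hk
  have hm : 0 < m := Nat.pos_of_mul_pos_left hN
  rw [ZMod.natCast_eq_zero_iff, Nat.mul_div_cancel_left m (Nat.pos_of_mul_pos_right hN),
    Nat.mul_dvd_mul_iff_right hm]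

lemma ZMod.eq_zero_or_eq_one (s : ZMod 2) : s = 0 ∨ s = 1 := by
  revert s; decide

lemma ZMod.eq_or_eq_of_ne {s t : ZMod 2} (h : s ≠ t) (u : ZMod 2) : u = s ∨ u = t := by
  revert s t u; decide

lemma ZMod.add_one_add_one (s : ZMod 2) : s + 1 + 1 = s := by
  revert s; decide

lemma ZMod.eq_add_one_of_ne {s t : ZMod 2} (h : s ≠ t) : t = s + 1 := by
  revert s t; decide

lemma Nat.eq_of_dvd_two_mul_prime {p k : ℕ} (hp : p.Prime) (hk : k ∣ 2 * p) :
    k = 1 ∨ k = 2 ∨ k = p ∨ k = 2 * p := by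
  obtain ⟨a, b, ha, hb, rfl⟩ := Nat.dvd_mul.1 hk
  rcases (Nat.dvd_prime Nat.prime_two).1 ha with rfl | rfl <;>
    rcases (Nat.dvd_prime hp).1 hb with rfl | rfl <;> simp

lemma pow_apply_of_shift {V A : Type*} [AddMonoid A] {c : A → V} {α : Perm V} {d : A}
    (h : ∀ i, α (c i) = c (i + d)) (t : ℕ) (i : A) : (α ^ t) (c i) = c (i + t • d) := by
  induction t generalizing i with
  | zero => simp
  | succ t ih => rw [pow_succ, Perm.mul_apply, h, ih, add_assoc, succ_nsmul']

section HamiltonCycle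

variable {V : Type*} [Fintype V] {X : SimpleGraph V}

lemma isHamCycle_of_nat [Nonempty V] (f : ℕ → V) (hinj : Set.InjOn f (Set.Iio (Fintype.card V)))
    (hadj : ∀ j < Fintype.card V, X.Adj (f j) (f ((j + 1) % Fintype.card V))) :
    IsHamCycle X (fun i => f i.val) := by
  refine ⟨?_, fun i => ?_⟩
  · rw [Fintype.bijective_iff_injective_and_card, ZMod.card]
    exact ⟨fun i j h => ZMod.val_injective _ (hinj (ZMod.val_lt i) (ZMod.val_lt j) h), rfl⟩
  · have hsucc : i + 1 = ((i.val + 1 : ℕ) : ZMod (Fintype.card V)) := by simp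
    show X.Adj (f i.val) (f (i + 1).val)
    rw [hsucc, ZMod.val_natCast]
    exact hadj _ (ZMod.val_lt i)

lemma IsHamCycle.pow_apply_eq_self_iff [Nonempty V] {c : ZMod (Fintype.card V) → V}
    (hc : IsHamCycle X c) {k : ℕ} (hk : k ∣ Fintype.card V) {α : Perm V}
    (hα : ∀ i, α (c i) = c (i + (Fintype.card V / k : ℕ))) (j : ℕ) (v : V) :
    (α ^ j) v = v ↔ k ∣ j := by
  obtain ⟨i, rfl⟩ := hc.1.surjective v
  rw [pow_apply_of_shift hα, hc.1.injective.eq_iff, add_eq_left, nsmul_eq_mul, ← Nat.cast_mul,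
    ZMod.natCast_mul_div_eq_zero_iff hk Fintype.card_pos]

lemma hamiltonCompression_eq_one {c : ZMod (Fintype.card V) → V} (hc : IsHamCycle X c)
    (h : ∀ c k, IsHamCycle X c → IsSymmHamCycle X c k → k = 1) :
    hamiltonCompression X = 1 := by
  have h1 : IsSymmHamCycle X c 1 := ⟨one_dvd _, 1, one_mem _, by simp⟩
  have : {k | ∃ c, IsHamCycle X c ∧ IsSymmHamCycle X c k} = {1} :=
    Set.eq_singleton_iff_unique_mem.2 ⟨⟨c, hc, h1⟩, fun k ⟨c, hc, hk⟩ => h c k hc hk⟩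
  rw [hamiltonCompression, this, csSup_singleton]

end HamiltonCycle

lemma exists_sq_eq_one_fixedPointFree_of_regular {V : Type*} [Finite V] [Nonempty V]
    {H : Subgroup (Perm V)} (hreg : ∀ u v : V, ∃! g : H, (g : Perm V) u = v)
    (h2 : 2 ∣ Nat.card V) : ∃ g ∈ H, g ^ 2 = 1 ∧ ∀ v, g v ≠ v := by
  obtain ⟨v₀⟩ := ‹Nonempty V›
  have hbij : Bijective (fun g : H => (g : Perm V) v₀) :=
    ⟨fun g₁ g₂ h => (hreg v₀ _).unique rfl h.symm, fun v => (hreg v₀ v).exists⟩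
  obtain ⟨g, hg⟩ := exists_prime_orderOf_dvd_card' 2 (Nat.card_eq_of_bijective _ hbij ▸ h2)
  refine ⟨g, g.2, by rw [← Subgroup.coe_pow, ← hg, pow_orderOf_eq_one]; rfl, fun v hv => ?_⟩
  have : g = 1 := (hreg v v).unique hv rfl
  simp [this] at hg

lemma autSubgroup_apply_mem_commonNeighbors_iff {V : Type*} {X : SimpleGraph V} {α : Perm V}
    (hα : α ∈ autSubgroup X) {u v z : V} :
    α z ∈ X.commonNeighbors (α u) (α v) ↔ z ∈ X.commonNeighbors u v := by
  simp only [SimpleGraph.mem_commonNeighbors, hα _ _]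

namespace TwinCirculant

def jumps : Finset ℤ := {1, -1, 2, -2}

lemma mem_jumps {a : ℤ} : a ∈ jumps ↔ a = 1 ∨ a = -1 ∨ a = 2 ∨ a = -2 := by
  simp [jumps]

lemma natAbs_le_two_of_mem_jumps {a : ℤ} (ha : a ∈ jumps) : a.natAbs ≤ 2 := by
  rw [mem_jumps] at ha
  omega

lemma mul_mem_jumps {a ε : ℤ} (ha : a ∈ jumps) (hε : ε ∈ ({1, -1} : Finset ℤ)) :
    a * ε ∈ jumps := by
  simp only [Finset.mem_insert, Finset.mem_singleton] at hε
  rw [mem_jumps] at ha ⊢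
  rcases hε with rfl | rfl <;> omega

lemma exists_mem_jumps_sub_mem : ∀ b ∈ jumps, ∃ a ∈ jumps, a - b ∈ jumps := by
  decide

lemma eq_of_mem_jumps_sub_mem : ∀ b ∈ jumps, b ≠ 1 → b ≠ -1 →
    ∀ a ∈ jumps, ∀ a' ∈ jumps, a - b ∈ jumps → a' - b ∈ jumps → a = a' := by
  decide

def step {p : ℕ} (r : ZMod p) (s : ZMod 2) : ZMod p := if s = 0 then 1 else r

def graph (p : ℕ) (r : ZMod p) : SimpleGraph (ZMod 2 × ZMod p) where
  Adj u v := (u.1 = v.1 ∧ u.2 ≠ v.2 ∧ ∃ a ∈ jumps, v.2 = u.2 + a * step r u.1) ∨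
    (u.1 ≠ v.1 ∧ u.2 = v.2)
  symm := ⟨by
    rintro ⟨s, x⟩ ⟨t, y⟩ (⟨rfl, hxy, a, ha, rfl⟩ | ⟨hst, rfl⟩)
    · exact Or.inl ⟨rfl, hxy.symm, -a, by rw [mem_jumps] at ha ⊢; omega, by push_cast; ring⟩
    · exact Or.inr ⟨Ne.symm hst, rfl⟩⟩
  loopless := ⟨fun _ h => by rcases h with ⟨-, h, -⟩ | ⟨h, -⟩ <;> exact h rfl⟩

variable {p : ℕ} {r : ZMod p}

@[simp] lemma step_zero : step r 0 = 1 := rfl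

@[simp] lemma step_one : step r 1 = r := rfl

lemma adj_cross_iff {s t : ZMod 2} (hst : s ≠ t) {x y : ZMod p} :
    (graph p r).Adj (s, x) (t, y) ↔ x = y := by
  simp [graph, hst]

lemma commonNeighbors_cross_eq_empty {s t : ZMod 2} (hst : s ≠ t) (x : ZMod p) :
    (graph p r).commonNeighbors (s, x) (t, x) = ∅ := by
  refine Set.eq_empty_of_forall_notMem fun ⟨u, y⟩ ⟨h₁, h₂⟩ => ?_
  obtain rfl | rfl := ZMod.eq_or_eq_of_ne hst u
  · obtain rfl : x = y := (adj_cross_iff hst.symm).1 h₂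
    exact (graph p r).irrefl h₁
  · obtain rfl : x = y := (adj_cross_iff hst).1 h₁
    exact (graph p r).irrefl h₂

def translate (c : ZMod p) : Perm (ZMod 2 × ZMod p) :=
  (Equiv.refl _).prodCongr (Equiv.addRight c)

def reflect (b : ZMod p) : Perm (ZMod 2 × ZMod p) :=
  (Equiv.refl _).prodCongr (Equiv.subLeft b)

@[simp] lemma translate_apply (c : ZMod p) (v : ZMod 2 × ZMod p) :
    translate c v = (v.1, v.2 + c) := rfl

@[simp] lemma reflect_apply (b : ZMod p) (v : ZMod 2 × ZMod p) :
    reflect b v = (v.1, b - v.2) := rfl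

lemma translate_eq_one_iff {c : ZMod p} : translate c = 1 ↔ c = 0 := by
  refine ⟨fun h => ?_, fun h => by ext <;> simp [h]⟩
  simpa using congrArg (fun f : Perm _ => (f (0, 0)).2) h

lemma translate_pow (c : ZMod p) (n : ℕ) : translate c ^ n = translate ((n : ZMod p) * c) := by
  induction n with
  | zero => ext <;> simp
  | succ n ih => ext <;> simp [pow_succ', ih]; ring

lemma reflect_sq (b : ZMod p) : reflect b ^ 2 = 1 := by
  ext <;> simp [sq]

lemma reflect_ne_one (h2 : (2 : ZMod p) ≠ 0) (b : ZMod p) : reflect b ≠ 1 := fun h => by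
  have h0 := congrArg (fun f : Perm _ => (f (0, 0)).2) h
  have h1 := congrArg (fun f : Perm _ => (f (0, 1)).2) h
  simp only [reflect_apply, Perm.one_apply, sub_zero] at h0 h1
  exact h2 (by linear_combination h0 - h1)

/-- `0, 1, …, m - 1`, then up through `m + 1, m + 3, …` and back down through `…, m + 2, m`:
a Hamilton path from `0` to `m` in the circulant on `ZMod q` with jumps `±1, ±2`. -/
def zigzag (q m j : ℕ) : ℕ :=
  if j < m then j
  else if j - m + 1 ≤ (q - m) / 2 then m + 2 * (j - m + 1) - 1
  else m + 2 * ((q - m) - (j - m + 1))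

lemma zigzag_lt {q m j : ℕ} (hmq : m < q) (hj : j < q) : zigzag q m j < q := by
  simp only [zigzag]; split_ifs <;> omega

lemma zigzag_zero {q m : ℕ} (hm : 1 ≤ m) : zigzag q m 0 = 0 := by
  simp only [zigzag]; split_ifs <;> omega

lemma zigzag_last {q m : ℕ} (hmq : m < q) : zigzag q m (q - 1) = m := by
  simp only [zigzag]; split_ifs <;> omega

lemma zigzag_succ_sub_mem_jumps {q m j : ℕ} (hm : 1 ≤ m) (hmq : m < q) (hj : j + 1 < q) :
    (zigzag q m (j + 1) : ℤ) - zigzag q m j ∈ jumps := by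
  rw [mem_jumps]; simp only [zigzag]; split_ifs <;> omega

lemma zigzag_injOn {q m : ℕ} (hmq : m < q) : Set.InjOn (zigzag q m) (Set.Iio q) := by
  intro j₁ h₁ j₂ h₂ h
  simp only [Set.mem_Iio, zigzag] at h₁ h₂ h
  split_ifs at h <;> omega

/-- Along `zigzag` from `(0, 0)` to `(0, r)`, across to `(1, r)`, then through
`(1, 2r), …, (1, pr) = (1, 0)`, whose spoke closes the cycle. -/
def hamCycleVertex (p : ℕ) (r : ZMod p) (j : ℕ) : ZMod 2 × ZMod p :=
  if j < p then (0, zigzag p r.val j) else (1, r * ((j - p : ℕ) + 1))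

variable [Fact p.Prime]

lemma ne_zero_of_mul_self_eq_neg_one (hr : r * r = -1) : r ≠ 0 := by
  rintro rfl
  simp at hr

lemma step_ne_zero (hr : r ≠ 0) (s : ZMod 2) : step r s ≠ 0 := by
  obtain rfl | rfl := ZMod.eq_zero_or_eq_one s
  exacts [one_ne_zero, hr]

lemma reflect_apply_half (h2 : (2 : ZMod p) ≠ 0) (b : ZMod p) (s : ZMod 2) :
    reflect b (s, b / 2) = (s, b / 2) := by
  have : NeZero (2 : ZMod p) := ⟨h2⟩
  simp [sub_half]

lemma card_vertices : Fintype.card (ZMod 2 × ZMod p) = 2 * p := by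
  simp [ZMod.card]

def swapLayers (hr : r ≠ 0) : Perm (ZMod 2 × ZMod p) :=
  (Equiv.addRight 1).prodCongr (Equiv.mulLeft₀ r hr)

@[simp] lemma swapLayers_apply (hr : r ≠ 0) (v : ZMod 2 × ZMod p) :
    swapLayers hr v = (v.1 + 1, r * v.2) := rfl

lemma adj_layer_iff (hp : 2 < p) (hr : r ≠ 0) {s : ZMod 2} {x y : ZMod p} :
    (graph p r).Adj (s, x) (s, y) ↔ ∃ a ∈ jumps, y = x + a * step r s := by
  refine ⟨fun h => h.elim (fun h => h.2.2) (fun h => absurd rfl h.1), fun ⟨a, ha, hy⟩ => ?_⟩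
  refine Or.inl ⟨rfl, fun hxy => ?_, a, ha, hy⟩
  have := ZMod.eq_zero_of_intCast_mul_eq_zero (a := a) (step_ne_zero hr s)
    (by have := natAbs_le_two_of_mem_jumps ha; omega) (by linear_combination -hxy - hy)
  rw [mem_jumps] at ha
  omega

lemma translate_mem (hp : 2 < p) (hr : r ≠ 0) (c : ZMod p) :
    translate c ∈ autSubgroup (graph p r) := by
  rintro ⟨s, x⟩ ⟨t, y⟩
  simp only [translate_apply]
  rcases eq_or_ne s t with rfl | hst
  · simp only [adj_layer_iff hp hr, add_right_comm x c, add_left_inj]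
  · rw [adj_cross_iff hst, adj_cross_iff hst, add_left_inj]

lemma exists_sign_step_add_one (hr : r * r = -1) (s : ZMod 2) :
    ∃ ε ∈ ({1, -1} : Finset ℤ), step r (s + 1) = ε * (r * step r s) := by
  obtain rfl | rfl := ZMod.eq_zero_or_eq_one s
  · exact ⟨1, by decide, by simp⟩
  · exact ⟨-1, by decide, by rw [show (1 : ZMod 2) + 1 = 0 by decide]; simp [hr]⟩

lemma swapLayers_mem (hp : 2 < p) (hr : r * r = -1) :
    swapLayers (ne_zero_of_mul_self_eq_neg_one hr) ∈ autSubgroup (graph p r) := by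
  have hr0 := ne_zero_of_mul_self_eq_neg_one hr
  rintro ⟨s, x⟩ ⟨t, y⟩
  simp only [swapLayers_apply]
  rcases eq_or_ne s t with rfl | hst
  · obtain ⟨ε, hε, hstep⟩ := exists_sign_step_add_one hr s
    have hε2 : (ε : ZMod p) * ε = 1 := by
      simp only [Finset.mem_insert, Finset.mem_singleton] at hε
      rcases hε with rfl | rfl <;> simp
    rw [adj_layer_iff hp hr0, adj_layer_iff hp hr0, hstep]
    constructor
    · rintro ⟨a, ha, h⟩
      refine ⟨a * ε, mul_mem_jumps ha hε, mul_left_cancel₀ hr0 ?_⟩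
      rw [h]; push_cast; ring
    · rintro ⟨a, ha, rfl⟩
      refine ⟨a * ε, mul_mem_jumps ha hε, ?_⟩
      push_cast
      linear_combination (-(a * r * step r s)) * hε2
  · have hst' : s + 1 ≠ t + 1 := fun h => hst (by simpa using h)
    rw [adj_cross_iff hst', adj_cross_iff hst, mul_right_inj' hr0]

lemma exists_aut_apply_eq (hp : 2 < p) (hr : r * r = -1) (u v : ZMod 2 × ZMod p) :
    ∃ g ∈ autSubgroup (graph p r), g u = v := by
  obtain ⟨s, x⟩ := u
  obtain ⟨t, y⟩ := v
  rcases eq_or_ne s t with rfl | hst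
  · exact ⟨translate (y - x), translate_mem hp (ne_zero_of_mul_self_eq_neg_one hr) _, by simp⟩
  · refine ⟨translate (y - r * x) * swapLayers (ne_zero_of_mul_self_eq_neg_one hr),
      mul_mem (translate_mem hp (ne_zero_of_mul_self_eq_neg_one hr) _) (swapLayers_mem hp hr), ?_⟩
    simp [ZMod.eq_add_one_of_ne hst]

lemma mem_commonNeighbors_layer_iff (hp : 6 < p) (hr : r ≠ 0) {s : ZMod 2} {x : ZMod p} {b : ℤ}
    (hb : b ∈ jumps) {z : ZMod 2 × ZMod p} :
    z ∈ (graph p r).commonNeighbors (s, x) (s, x + b * step r s) ↔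
      ∃ a ∈ jumps, a - b ∈ jumps ∧ z = (s, x + a * step r s) := by
  obtain ⟨t, y⟩ := z
  rw [SimpleGraph.mem_commonNeighbors]
  rcases eq_or_ne s t with rfl | hst
  · rw [adj_layer_iff (by omega) hr, adj_layer_iff (by omega) hr]
    constructor
    · rintro ⟨⟨a, ha, rfl⟩, a', ha', h⟩
      have := ZMod.eq_zero_of_intCast_mul_eq_zero (a := a - b - a') (step_ne_zero hr s)
        (by have := natAbs_le_two_of_mem_jumps ha; have := natAbs_le_two_of_mem_jumps hb
            have := natAbs_le_two_of_mem_jumps ha'; omega)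
        (by push_cast; linear_combination h)
      exact ⟨a, ha, by rwa [show a - b = a' by omega], rfl⟩
    · rintro ⟨a, ha, hab, h⟩
      obtain rfl := (Prod.mk.inj h).2
      exact ⟨⟨a, ha, rfl⟩, a - b, hab, by push_cast; ring⟩
  · rw [adj_cross_iff hst, adj_cross_iff hst]
    constructor
    · rintro ⟨rfl, h⟩
      have := ZMod.eq_zero_of_intCast_mul_eq_zero (a := b) (step_ne_zero hr s)
        (by have := natAbs_le_two_of_mem_jumps hb; omega) (by linear_combination h)
      rw [mem_jumps] at hb
      omega
    · rintro ⟨a, -, -, h⟩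
      exact absurd (Prod.mk.inj h).1 hst.symm

lemma eq_add_one_of_commonNeighbors_eq_empty (hp : 6 < p) (hr : r ≠ 0)
    {u v : ZMod 2 × ZMod p} (huv : (graph p r).Adj u v)
    (h : (graph p r).commonNeighbors u v = ∅) : v = (u.1 + 1, u.2) := by
  obtain ⟨s, x⟩ := u
  obtain ⟨t, y⟩ := v
  rcases eq_or_ne s t with rfl | hst
  · obtain ⟨b, hb, rfl⟩ := (adj_layer_iff (by omega) hr).1 huv
    obtain ⟨a, ha, hab⟩ := exists_mem_jumps_sub_mem b hb
    exact absurd ((mem_commonNeighbors_layer_iff hp hr hb).2 ⟨a, ha, hab, rfl⟩)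
      (h ▸ Set.notMem_empty _)
  · rw [adj_cross_iff hst] at huv
    rw [ZMod.eq_add_one_of_ne hst, huv]

lemma eq_add_step_of_two_commonNeighbors (hp : 6 < p) (hr : r ≠ 0) {u v : ZMod 2 × ZMod p}
    (huv : (graph p r).Adj u v) {z w : ZMod 2 × ZMod p} (hzw : z ≠ w)
    (hz : z ∈ (graph p r).commonNeighbors u v) (hw : w ∈ (graph p r).commonNeighbors u v) :
    ∃ b ∈ ({1, -1} : Finset ℤ), v = (u.1, u.2 + b * step r u.1) := by
  obtain ⟨s, x⟩ := u
  obtain ⟨t, y⟩ := v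
  rcases eq_or_ne s t with rfl | hst
  · obtain ⟨b, hb, rfl⟩ := (adj_layer_iff (by omega) hr).1 huv
    obtain ⟨a, ha, hab, rfl⟩ := (mem_commonNeighbors_layer_iff hp hr hb).1 hz
    obtain ⟨a', ha', hab', rfl⟩ := (mem_commonNeighbors_layer_iff hp hr hb).1 hw
    refine ⟨b, ?_, rfl⟩
    by_contra hb1
    simp only [Finset.mem_insert, Finset.mem_singleton, not_or] at hb1
    exact hzw (by rw [eq_of_mem_jumps_sub_mem b hb hb1.1 hb1.2 a ha a' ha' hab hab'])
  · rw [adj_cross_iff hst] at huv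
    subst huv
    exact absurd hz (commonNeighbors_cross_eq_empty hst x ▸ Set.notMem_empty z)

lemma exists_two_commonNeighbors_step (hp : 6 < p) (hr : r ≠ 0) (s : ZMod 2) (x : ZMod p) :
    ∃ z w, z ≠ w ∧ z ∈ (graph p r).commonNeighbors (s, x) (s, x + step r s) ∧
      w ∈ (graph p r).commonNeighbors (s, x) (s, x + step r s) := by
  have hmem := fun z => mem_commonNeighbors_layer_iff (s := s) (x := x) (z := z) hp hr
    (b := 1) (by decide)
  simp only [Int.cast_one, one_mul] at hmem
  refine ⟨(s, x + (2 : ℤ) * step r s), (s, x + (-1 : ℤ) * step r s), fun h => ?_,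
    (hmem _).2 ⟨2, by decide, by decide, rfl⟩, (hmem _).2 ⟨-1, by decide, by decide, rfl⟩⟩
  have := ZMod.eq_zero_of_intCast_mul_eq_zero (a := 3) (step_ne_zero hr s) (by omega)
    (by push_cast; linear_combination (Prod.mk.inj h).2)
  omega

lemma aut_apply_add_one (hp : 6 < p) (hr : r ≠ 0) {α : Perm (ZMod 2 × ZMod p)}
    (hα : α ∈ autSubgroup (graph p r)) (t : ZMod 2) (x : ZMod p) :
    α (t + 1, x) = ((α (t, x)).1 + 1, (α (t, x)).2) := by
  have hne : t ≠ t + 1 := by revert t; decide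
  refine eq_add_one_of_commonNeighbors_eq_empty hp hr ((hα _ _).2 ((adj_cross_iff hne).2 rfl)) ?_
  refine Set.eq_empty_of_forall_notMem fun z hz => ?_
  rw [← α.apply_symm_apply z, autSubgroup_apply_mem_commonNeighbors_iff hα,
    commonNeighbors_cross_eq_empty hne] at hz
  exact hz

lemma aut_apply_add_step (hp : 6 < p) (hr : r ≠ 0) {α : Perm (ZMod 2 × ZMod p)}
    (hα : α ∈ autSubgroup (graph p r)) (s : ZMod 2) (x : ZMod p) :
    ∃ b ∈ ({1, -1} : Finset ℤ),
      α (s, x + step r s) = ((α (s, x)).1, (α (s, x)).2 + b * step r (α (s, x)).1) := by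
  obtain ⟨z, w, hzw, hz, hw⟩ := exists_two_commonNeighbors_step hp hr s x
  refine eq_add_step_of_two_commonNeighbors hp hr ((hα _ _).2 ?_) (α.injective.ne hzw)
    ((autSubgroup_apply_mem_commonNeighbors_iff hα).2 hz)
    ((autSubgroup_apply_mem_commonNeighbors_iff hα).2 hw)
  exact (adj_layer_iff (by omega) hr).2 ⟨1, by decide, by simp⟩

lemma aut_apply_eq (hp : 6 < p) (hr : r ≠ 0) {α : Perm (ZMod 2 × ZMod p)}
    (hα : α ∈ autSubgroup (graph p r)) :
    ∃ (t : ZMod 2) (b : ZMod p), ∃ ε ∈ ({1, -1} : Finset ℤ),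
      ∀ s x, α (s, x) = (s + t, b + ε * step r t * x) := by
  set t := (α (0, 0)).1
  have hlayer : ∀ x, (α (0, x)).1 = t := ZMod.forall_of_add_one rfl fun x hx => by
    obtain ⟨b, -, h⟩ := aut_apply_add_step hp hr hα 0 x
    rw [step_zero] at h
    rw [h, hx]
  have hstep : ∀ x, ∃ ε ∈ ({1, -1} : Finset ℤ),
      (α (0, x + 1)).2 = (α (0, x)).2 + ε * step r t := fun x => by
    obtain ⟨b, hb, h⟩ := aut_apply_add_step hp hr hα 0 x
    rw [step_zero] at h
    exact ⟨b, hb, by rw [h, hlayer]⟩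
  have hinj : Injective fun x => (α (0, x)).2 := fun x y h =>
    (Prod.mk.inj (α.injective (Prod.ext ((hlayer x).trans (hlayer y).symm) h))).2
  obtain ⟨ε, hε, hβ⟩ :=
    ZMod.exists_sign_of_injective (ZMod.two_ne_zero_of_lt (by omega)) hinj hstep
  refine ⟨t, (α (0, 0)).2, ε, hε, fun s x => ?_⟩
  have h0 : α (0, x) = (t, (α (0, 0)).2 + ε * step r t * x) := Prod.ext (hlayer x) (hβ x)
  obtain rfl | rfl := ZMod.eq_zero_or_eq_one s
  · rw [h0, zero_add]
  · rw [← zero_add (1 : ZMod 2), aut_apply_add_one hp hr hα, h0]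
    simp [add_comm]

lemma aut_cases (hp : 6 < p) (hr : r * r = -1) {α : Perm (ZMod 2 × ZMod p)}
    (hα : α ∈ autSubgroup (graph p r)) :
    (∃ c, α = translate c) ∨ (∃ b, α = reflect b) ∨ ∃ b, α ^ 2 = reflect b := by
  obtain ⟨t, b, ε, hε, h⟩ := aut_apply_eq hp (ne_zero_of_mul_self_eq_neg_one hr) hα
  simp only [Finset.mem_insert, Finset.mem_singleton] at hε
  obtain rfl | rfl := ZMod.eq_zero_or_eq_one t <;> obtain rfl | rfl := hε
  · exact Or.inl ⟨b, Perm.ext fun v => by rw [h]; ext <;> simp [add_comm]⟩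
  · exact Or.inr (Or.inl ⟨b, Perm.ext fun v => by rw [h]; ext <;> simp [sub_eq_add_neg]⟩)
  · refine Or.inr (Or.inr ⟨b + r * b, Perm.ext fun v => ?_⟩)
    rw [sq, Perm.mul_apply, h, h]
    ext
    · simp [ZMod.add_one_add_one]
    · simp; linear_combination v.2 * hr
  · refine Or.inr (Or.inr ⟨b - r * b, Perm.ext fun v => ?_⟩)
    rw [sq, Perm.mul_apply, h, h]
    ext
    · simp [ZMod.add_one_add_one]
    · simp; linear_combination v.2 * hr

lemma exists_apply_eq_self_of_sq_eq_one (hp : 6 < p) (hr : r * r = -1)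
    {α : Perm (ZMod 2 × ZMod p)} (hα : α ∈ autSubgroup (graph p r)) (h2 : α ^ 2 = 1) :
    ∃ v, α v = v := by
  have htwo := ZMod.two_ne_zero_of_lt (p := p) (by omega)
  rcases aut_cases hp hr hα with ⟨c, rfl⟩ | ⟨b, rfl⟩ | ⟨b, hb⟩
  · rw [translate_pow, translate_eq_one_iff, Nat.cast_two] at h2
    obtain rfl := (mul_eq_zero.1 h2).resolve_left htwo
    exact ⟨(0, 0), by simp⟩
  · exact ⟨(0, b / 2), reflect_apply_half htwo b 0⟩
  · exact absurd (hb.symm.trans h2) (reflect_ne_one htwo b)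

lemma pow_four_eq_one_or_pow_eq_one (hp : 6 < p) (hr : r * r = -1)
    {α : Perm (ZMod 2 × ZMod p)} (hα : α ∈ autSubgroup (graph p r)) :
    α ^ 4 = 1 ∨ α ^ p = 1 := by
  rcases aut_cases hp hr hα with ⟨c, rfl⟩ | ⟨b, rfl⟩ | ⟨b, hb⟩
  · rw [translate_pow c p, ZMod.natCast_self, zero_mul, translate_eq_one_iff]
    exact Or.inr rfl
  · rw [show 4 = 2 * 2 from rfl, pow_mul, reflect_sq, one_pow]
    exact Or.inl rfl
  · rw [show 4 = 2 * 2 from rfl, pow_mul, hb, reflect_sq]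
    exact Or.inl rfl

lemma exists_eq_translate_of_pow_eq_one (hp : 6 < p) (hr : r * r = -1)
    {α : Perm (ZMod 2 × ZMod p)} (hα : α ∈ autSubgroup (graph p r)) (hαp : α ^ p = 1)
    (hfix : ∀ v, α v ≠ v) : ∃ c ≠ 0, α = translate c := by
  have htwo := ZMod.two_ne_zero_of_lt (p := p) (by omega)
  rcases aut_cases hp hr hα with ⟨c, rfl⟩ | ⟨b, rfl⟩ | ⟨b, hb⟩
  · exact ⟨c, fun hc => hfix (0, 0) (by simp [hc]), rfl⟩
  · exact absurd (reflect_apply_half htwo b 0) (hfix _)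
  · have hcop : Nat.Coprime 4 p := Nat.Coprime.symm <|
      (Nat.Prime.coprime_iff_not_dvd Fact.out).2 fun h => by
        have := Nat.le_of_dvd (by norm_num) h; omega
    have hα1 : α ^ Nat.gcd 4 p = 1 :=
      pow_gcd_eq_one.2 ⟨by rw [show 4 = 2 * 2 from rfl, pow_mul, hb, reflect_sq], hαp⟩
    rw [hcop.gcd_eq_one, pow_one] at hα1
    exact absurd (by simp [hα1]) (hfix (0, 0))

lemma not_exists_regular (hp : 6 < p) (hr : r * r = -1) :
    ¬ ∃ H : Subgroup (Perm (ZMod 2 × ZMod p)), H ≤ autSubgroup (graph p r) ∧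
      ∀ u v : ZMod 2 × ZMod p, ∃! g : H, (g : Perm (ZMod 2 × ZMod p)) u = v := by
  rintro ⟨H, hH, hreg⟩
  obtain ⟨g, hg, hg2, hfix⟩ := exists_sq_eq_one_fixedPointFree_of_regular hreg
    (by simp [Nat.card_eq_fintype_card])
  obtain ⟨v, hv⟩ := exists_apply_eq_self_of_sq_eq_one hp hr (hH hg) hg2
  exact hfix v hv

lemma hamCycleVertex_injOn (hr : r ≠ 0) : Set.InjOn (hamCycleVertex p r) (Set.Iio (2 * p)) := by
  intro j₁ h₁ j₂ h₂ h
  simp only [Set.mem_Iio] at h₁ h₂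
  unfold hamCycleVertex at h
  split_ifs at h with H₁ H₂ H₂
  · exact zigzag_injOn (ZMod.val_lt r) H₁ H₂ (ZMod.natCast_injOn p
      (zigzag_lt (ZMod.val_lt r) H₁) (zigzag_lt (ZMod.val_lt r) H₂) (Prod.mk.inj h).2)
  · exact absurd (Prod.mk.inj h).1 (by decide)
  · exact absurd (Prod.mk.inj h).1 (by decide)
  · have := ZMod.natCast_injOn p (show j₁ - p < p by omega) (show j₂ - p < p by omega)
      (by simpa [hr] using (Prod.mk.inj h).2)
    omega

lemma hamCycleVertex_adj (hp : 6 < p) (hr : r ≠ 0) {j : ℕ} (hj : j < 2 * p) :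
    (graph p r).Adj (hamCycleVertex p r j) (hamCycleVertex p r ((j + 1) % (2 * p))) := by
  have hm : 1 ≤ r.val := ZMod.val_pos.2 hr
  have hmp : r.val < p := ZMod.val_lt r
  rcases lt_trichotomy (j + 1) p with h | h | h
  · rw [Nat.mod_eq_of_lt (by omega)]
    simp only [hamCycleVertex, if_pos h, if_pos (show j < p by omega)]
    refine (adj_layer_iff (by omega) hr).2 ⟨_, zigzag_succ_sub_mem_jumps hm hmp h, ?_⟩
    rw [step_zero]
    push_cast
    ring
  · rw [Nat.mod_eq_of_lt (by omega)]
    simp only [hamCycleVertex, if_pos (show j < p by omega), if_neg (show ¬ j + 1 < p by omega)]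
    rw [adj_cross_iff (by decide), show j + 1 - p = 0 by omega, show j = p - 1 by omega,
      zigzag_last hmp]
    simp
  · rcases (show j + 1 < 2 * p ∨ j + 1 = 2 * p by omega) with h' | h'
    · rw [Nat.mod_eq_of_lt h']
      simp only [hamCycleVertex, if_neg (show ¬ j < p by omega),
        if_neg (show ¬ j + 1 < p by omega)]
      refine (adj_layer_iff (by omega) hr).2 ⟨1, by decide, ?_⟩
      rw [show j + 1 - p = j - p + 1 by omega, step_one]
      push_cast
      ring
    · rw [h', Nat.mod_self]
      simp only [hamCycleVertex, if_neg (show ¬ j < p by omega), if_pos (show 0 < p by omega),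
        zigzag_zero hm]
      rw [adj_cross_iff (by decide), Nat.cast_zero, eq_comm,
        show ((j - p : ℕ) : ZMod p) + 1 = ((j - p + 1 : ℕ) : ZMod p) by push_cast; ring,
        show j - p + 1 = p by omega, ZMod.natCast_self, mul_zero]

lemma isHamCycle_hamCycleVertex (hp : 6 < p) (hr : r ≠ 0) :
    IsHamCycle (graph p r) fun i => hamCycleVertex p r i.val := by
  apply isHamCycle_of_nat
  · rw [card_vertices]; exact hamCycleVertex_injOn hr
  · rw [card_vertices]; exact fun j hj => hamCycleVertex_adj hp hr hj

lemma false_of_translate_shift_two {c : ZMod (Fintype.card (ZMod 2 × ZMod p)) → ZMod 2 × ZMod p}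
    (hc : IsHamCycle (graph p r) c) {d : ZMod p} (hd : d ≠ 0)
    (hshift : ∀ i, translate d (c i) = c (i + 2)) : False := by
  obtain ⟨⟨s, x⟩, h0⟩ : ∃ v, c 0 = v := ⟨_, rfl⟩
  obtain ⟨⟨t, y⟩, h1⟩ : ∃ v, c 1 = v := ⟨_, rfl⟩
  rcases eq_or_ne s t with rfl | hst
  · -- `c 1 = (translate d ^ n) (c 0) = c (2 * n)` is impossible modulo the even `2 * p`
    have hpow := pow_apply_of_shift hshift ((y - x) / d).val 0
    rw [translate_pow, h0, ZMod.natCast_zmod_val, translate_apply, div_mul_cancel₀ _ hd,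
      add_sub_cancel, ← h1] at hpow
    have h2 : (2 : ZMod 2) = 0 := rfl
    have := congrArg (ZMod.castHom (show 2 ∣ Fintype.card (ZMod 2 × ZMod p) by simp)
      (ZMod 2)) (hc.1.injective hpow)
    simp only [map_nsmul, map_one, map_ofNat, h2, smul_zero, zero_add] at this
    exact absurd this (by decide)
  · have h2 : c 2 = (s, x + d) := by rw [← zero_add (2 : ZMod _), ← hshift, h0]; rfl
    have e₁ := hc.2 0
    have e₂ := hc.2 1
    rw [zero_add, h0, h1, adj_cross_iff hst] at e₁
    rw [h1, one_add_one_eq_two, h2, adj_cross_iff hst.symm] at e₂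
    exact hd (by linear_combination -e₂ - e₁)

lemma eq_one_of_isSymmHamCycle (hp : 6 < p) (hr : r * r = -1)
    {c : ZMod (Fintype.card (ZMod 2 × ZMod p)) → ZMod 2 × ZMod p}
    (hc : IsHamCycle (graph p r) c)
    {k : ℕ} (hk : IsSymmHamCycle (graph p r) c k) : k = 1 := by
  obtain ⟨hdvd, α, hα, hshift⟩ := hk
  have hfix := hc.pow_apply_eq_self_iff hdvd hshift
  have hpow : ∀ j, k ∣ j → α ^ j = 1 := fun j hj => Perm.ext fun v => (hfix j v).2 hj
  rw [card_vertices] at hdvd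
  rcases Nat.eq_of_dvd_two_mul_prime Fact.out hdvd with rfl | rfl | hkp | rfl
  · rfl
  · obtain ⟨v, hv⟩ := exists_apply_eq_self_of_sq_eq_one hp hr hα (hpow 2 dvd_rfl)
    exact absurd ((hfix 1 v).1 (by simpa using hv)) (by decide)
  · subst k
    obtain ⟨d, hd, rfl⟩ := exists_eq_translate_of_pow_eq_one hp hr hα (hpow p dvd_rfl)
      fun v h => absurd (Nat.le_of_dvd one_pos ((hfix 1 v).1 (by simpa using h))) (by omega)
    refine (false_of_translate_shift_two hc hd fun i => ?_).elim
    have hdiv : Fintype.card (ZMod 2 × ZMod p) / p = 2 := by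
      rw [card_vertices, Nat.mul_div_cancel _ (by omega)]
    rw [hshift, hdiv, Nat.cast_ofNat]
  · rcases pow_four_eq_one_or_pow_eq_one hp hr hα with h | h
    · have := Nat.le_of_dvd (by norm_num) ((hfix 4 (0, 0)).1 (by rw [h]; rfl))
      omega
    · have := Nat.le_of_dvd (by omega) ((hfix p (0, 0)).1 (by rw [h]; rfl))
      omega

end TwinCirculant

/-- For every `N` there is a vertex-transitive graph with more than
`N` vertices which is not a Cayley graph (no subgroup of its automorphism group acts
regularly on the vertices) and whose Hamilton compression equals `1`. -/
theorem stmt11 (N : ℕ) :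
    ∃ (V : Type) (inst : Fintype V) (X : SimpleGraph V),
      N < @Fintype.card V inst ∧
      (∀ u v : V, ∃ g ∈ autSubgroup X, g u = v) ∧
      ¬ (∃ H : Subgroup (Equiv.Perm V), H ≤ autSubgroup X ∧
        ∀ u v : V, ∃! g : H, (g : Equiv.Perm V) u = v) ∧
      @hamiltonCompression V inst X = 1 := by
  obtain ⟨p, hpp, hNp, hp4⟩ := Nat.exists_prime_gt_modEq_one (k := 4) (max N 6) (by norm_num)
  have : Fact p.Prime := ⟨hpp⟩
  have hp : 6 < p := lt_of_le_of_lt (le_max_right N 6) hNp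
  obtain ⟨r, hr⟩ : ∃ r : ZMod p, r * r = -1 := by
    obtain ⟨r, hr⟩ := ZMod.exists_sq_eq_neg_one_iff (p := p) |>.2
      (by rw [Nat.ModEq] at hp4; omega)
    exact ⟨r, hr.symm⟩
  refine ⟨ZMod 2 × ZMod p, inferInstance, TwinCirculant.graph p r, ?_,
    TwinCirculant.exists_aut_apply_eq (by omega) hr, TwinCirculant.not_exists_regular hp hr,
    hamiltonCompression_eq_one (TwinCirculant.isHamCycle_hamCycleVertex hp
      (TwinCirculant.ne_zero_of_mul_self_eq_neg_one hr))
      fun c k hc hk => TwinCirculant.eq_one_of_isSymmHamCycle hp hr hc hk⟩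
  rw [TwinCirculant.card_vertices]
  omega
end

section
/- Let p be an odd prime and let X be a connected (2,p)-metacirculant relative to (ρ,σ). If the subgraph X̃(ρ) is connected and X is simultaneously a Cayley graph of the dihedral group of order 2p and of the cyclic group of order 2p, then the Hamilton compression of X equals 2p. -/
open SimpleGraph

/-- The spanning subgraph `X̃(ρ)` of `X` obtained by deleting every edge whose two
endpoints lie in the same orbit of the permutation `ρ`. -/
def delSubgraph {V : Type*} (X : SimpleGraph V) (ρ : Equiv.Perm V) : SimpleGraph V where
  Adj u v := X.Adj u v ∧ ¬ ∃ a : ℤ, (ρ ^ a) u = v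
  symm := ⟨by
    rintro u v ⟨h, hn⟩
    refine ⟨h.symm, ?_⟩
    rintro ⟨a, ha⟩
    exact hn ⟨-a, by rw [← ha, ← Equiv.Perm.mul_apply, ← zpow_add]; simp⟩⟩
  loopless := ⟨fun v h => h.2 ⟨0, rfl⟩⟩

/-- `X` is an `(m,n)`-metacirculant relative to `(ρ,σ)`: `ρ` and `σ` are
automorphisms of `X`, `ρ` is `(m,n)`-semiregular (all of its orbits have size `n`,
and there are `m` of them since `|V| = m·n`), `σ` normalizes `⟨ρ⟩` with
`σρσ⁻¹ = ρ^r` for some unit `r` of `ℤ/n`, `σ` cyclically permutes the orbits of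
`ρ`, and `σ^m` fixes some vertex. -/
def IsMetacirculant {V : Type*} [Fintype V] (X : SimpleGraph V) (m n : ℕ)
    (ρ σ : Equiv.Perm V) : Prop :=
  ρ ∈ autSubgroup X ∧ σ ∈ autSubgroup X ∧
  Fintype.card V = m * n ∧
  (∀ v : V, Set.ncard {w | ∃ a : ℤ, (ρ ^ a) v = w} = n) ∧
  (∃ r : (ZMod n)ˣ, σ * ρ * σ⁻¹ = ρ ^ (r : ZMod n).val) ∧
  (∀ u v : V, ∃ b a : ℤ, (ρ ^ a) ((σ ^ b) v) = u) ∧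
  (∃ v : V, (σ ^ m) v = v)

/-- `X` is a Cayley graph of the group `G`: the automorphism group of `X` contains a
subgroup isomorphic to `G` acting regularly on the vertex set. -/
def IsCayleyOf {V : Type*} (X : SimpleGraph V) (G : Type*) [Group G] : Prop :=
  ∃ H : Subgroup (Equiv.Perm V), H ≤ autSubgroup X ∧ Nonempty (H ≃* G) ∧
    ∀ u v : V, ∃! g : H, (g : Equiv.Perm V) u = v

/-!
As a Cayley graph of `ℤ/2p`, `X` is a circulant: its vertices are labelled by `ℤ/2p` so that
translations act as automorphisms. If `v₀` has a neighbour at a unit `s`, translating by `s`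
walks through all vertices along edges, a Hamilton cycle rotated one step by an automorphism,
so `κ(X) = 2p`.

Otherwise every edge joins two labels of equal parity or two labels differing by `p`. Both `ρ`
and the translation by `2` are fixed-point-free automorphisms of order `p`. Since `|V| < p²`,
the cycles of such an element are exactly the orbits of any Sylow `p`-subgroup of `Aut X`
containing it, so Sylow's theorem yields an automorphism `g` carrying the `ρ`-orbits to the
parity classes. Then every edge of `X̃(ρ)` joins `x` to `(g τ g⁻¹) x`, where `τ` is the
translation by `p`, an involution; hence `X̃(ρ)` has components of size at most `2` and cannot
be connected.
-/

open Equiv Function MulAction Multiplicative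

theorem Equiv.Perm.sameCycle_iff_mem_orbit_zpowers {V : Type*} (f : Perm V) (x y : V) :
    f.SameCycle x y ↔ y ∈ orbit (Subgroup.zpowers f) x := by
  constructor
  · rintro ⟨i, rfl⟩
    exact ⟨⟨f ^ i, Subgroup.zpow_mem_zpowers f i⟩, rfl⟩
  · rintro ⟨⟨_, i, rfl⟩, rfl⟩
    exact ⟨i, rfl⟩

theorem Equiv.Perm.pow_eq_one_of_ncard_sameCycle {V : Type*} [Finite V] {f : Perm V} {n : ℕ}
    (h : ∀ v, {w | f.SameCycle v w}.ncard = n) : f ^ n = 1 := by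
  classical
  ext v
  have hcard : minimalPeriod (f • ·) v = n := by
    have : Fintype (orbit (Subgroup.zpowers f) v) := Fintype.ofFinite _
    rw [minimalPeriod_eq_card, ← Nat.card_eq_fintype_card, ← h v, ← Nat.card_coe_set_eq]
    congr
    ext w
    exact (f.sameCycle_iff_mem_orbit_zpowers v w).symm
  have := (pow_smul_eq_iff_minimalPeriod_dvd (a := f) (b := v) (n := n)).mpr hcard.dvd
  simpa [Perm.smul_def] using this

theorem Equiv.Perm.apply_ne_self_of_ncard_sameCycle {V : Type*} {f : Perm V} {n : ℕ}
    (hn : n ≠ 1) (h : ∀ v, {w | f.SameCycle v w}.ncard = n) (v : V) : f v ≠ v := by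
  intro hv
  have : {w | f.SameCycle v w} = {v} := Set.eq_singleton_iff_unique_mem.mpr
    ⟨Perm.SameCycle.refl f v, fun w hw => (hw.eq_of_left hv).symm⟩
  exact hn (by rw [← h v, this, Set.ncard_singleton])

theorem IsPGroup.ncard_orbit_eq_of_lt_sq {P V : Type*} [Group P] [MulAction P V] [Finite V]
    {p : ℕ} [Fact p.Prime] (hP : IsPGroup p P) (hV : Nat.card V < p ^ 2) {x : V} {g : P}
    (hg : g • x ≠ x) : (orbit P x).ncard = p := by
  obtain ⟨n, hn⟩ := hP.card_orbit x
  rw [Nat.card_coe_set_eq] at hn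
  have hlt : p ^ n < p ^ 2 := hn ▸ (Set.ncard_le_card _).trans_lt hV
  have hn2 : n < 2 := (Nat.pow_lt_pow_iff_right (Fact.out : p.Prime).one_lt).mp hlt
  have hn0 : n ≠ 0 := by
    rintro rfl
    obtain ⟨y, hy⟩ := Set.ncard_eq_one.mp hn
    have h1 : x ∈ orbit P x := mem_orbit_self x
    have h2 : g • x ∈ orbit P x := mem_orbit x g
    rw [hy] at h1 h2
    exact hg (h2.trans h1.symm)
  rw [hn, show n = 1 by omega, pow_one]

theorem Equiv.Perm.sameCycle_iff_mem_orbit_of_isPGroup {V : Type*} [Finite V]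
    {P : Subgroup (Perm V)} {p : ℕ} [Fact p.Prime] (hP : IsPGroup p P) (hV : Nat.card V < p ^ 2)
    {f : Perm V} (hf : f ∈ P) (hfix : ∀ v, f v ≠ v) (x y : V) :
    f.SameCycle x y ↔ y ∈ orbit P x := by
  suffices orbit (Subgroup.zpowers f) x = orbit P x by
    rw [f.sameCycle_iff_mem_orbit_zpowers, this]
  have hsub : orbit (Subgroup.zpowers f) x ⊆ orbit P x := by
    rintro _ ⟨⟨g, hg⟩, rfl⟩
    exact ⟨⟨g, Subgroup.zpowers_le.mpr hf hg⟩, rfl⟩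
  refine Set.eq_of_subset_of_ncard_le hsub ?_ (Set.toFinite _)
  rw [hP.ncard_orbit_eq_of_lt_sq hV (g := ⟨f, hf⟩) (hfix x),
    (hP.to_le (Subgroup.zpowers_le.mpr hf)).ncard_orbit_eq_of_lt_sq hV
      (g := ⟨f, Subgroup.mem_zpowers f⟩) (hfix x)]

theorem isPGroup_zpowers_of_pow_eq_one {G : Type*} [Group G] {p : ℕ} {g : G} (hg : g ^ p = 1) :
    IsPGroup p (Subgroup.zpowers g) :=
  IsPGroup.of_card_dvd_pow (n := 1) <| by
    rw [Nat.card_zpowers, pow_one]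
    exact orderOf_dvd_of_pow_eq_one hg

theorem exists_mem_sameCycle_iff_sameCycle_inv_apply {V : Type*} [Finite V]
    {G : Subgroup (Perm V)} {p : ℕ} [Fact p.Prime] (hV : Nat.card V < p ^ 2) {f₁ f₂ : Perm V}
    (hf₁G : f₁ ∈ G) (hf₂G : f₂ ∈ G) (hf₁ : f₁ ^ p = 1) (hf₂ : f₂ ^ p = 1)
    (hfix₁ : ∀ v, f₁ v ≠ v) (hfix₂ : ∀ v, f₂ v ≠ v) :
    ∃ g ∈ G, ∀ x y, f₁.SameCycle x y ↔ f₂.SameCycle (g⁻¹ x) (g⁻¹ y) := by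
  set a₁ : G := ⟨f₁, hf₁G⟩
  set a₂ : G := ⟨f₂, hf₂G⟩
  obtain ⟨Q₁, hQ₁⟩ := (isPGroup_zpowers_of_pow_eq_one (g := a₁) (Subtype.ext hf₁)).exists_le_sylow
  obtain ⟨Q₂, hQ₂⟩ := (isPGroup_zpowers_of_pow_eq_one (g := a₂) (Subtype.ext hf₂)).exists_le_sylow
  obtain ⟨g, hg⟩ := exists_smul_eq G Q₂ Q₁
  have hconj : g * a₂ * g⁻¹ ∈ (Q₁ : Subgroup G) := by
    have := Subgroup.smul_mem_pointwise_smul a₂ (MulAut.conj g) _ (hQ₂ (Subgroup.mem_zpowers a₂))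
    rwa [← Sylow.coe_subgroup_smul, hg, MulAut.smul_def, MulAut.conj_apply] at this
  set P := (Q₁ : Subgroup G).map G.subtype
  have hP : IsPGroup p P := Q₁.isPGroup'.map _
  have hf₁P : f₁ ∈ P := ⟨a₁, hQ₁ (Subgroup.mem_zpowers a₁), rfl⟩
  have hf₃P : (g : Perm V) * f₂ * (g : Perm V)⁻¹ ∈ P := ⟨_, hconj, rfl⟩
  have hfix₃ : ∀ v, ((g : Perm V) * f₂ * (g : Perm V)⁻¹) v ≠ v := fun v h =>
    hfix₂ _ (Perm.eq_inv_iff_eq.mpr (by simpa only [Perm.mul_apply] using h))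
  refine ⟨g, g.2, fun x y => ?_⟩
  rw [Perm.sameCycle_iff_mem_orbit_of_isPGroup hP hV hf₁P hfix₁,
    ← Perm.sameCycle_iff_mem_orbit_of_isPGroup hP hV hf₃P hfix₃, Perm.sameCycle_conj]

theorem IsCayleyOf.exists_monoidHom {V G : Type*} [Group G] {X : SimpleGraph V}
    (h : IsCayleyOf X G) (v₀ : V) :
    ∃ φ : G →* Perm V, (∀ g, φ g ∈ autSubgroup X) ∧ Bijective fun g => φ g v₀ := by
  obtain ⟨H, hHX, ⟨e⟩, hreg⟩ := h
  refine ⟨H.subtype.comp e.symm.toMonoidHom, fun g => hHX (e.symm g).2, ?_⟩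
  exact ((bijective_iff_existsUnique _).mpr (hreg v₀)).comp e.symm.bijective

theorem adj_apply_iff_adj_inv_mul_apply {V G : Type*} [Group G] {X : SimpleGraph V}
    {φ : G →* Perm V} (hφ : ∀ g, φ g ∈ autSubgroup X) (v₀ : V) (g h : G) :
    X.Adj (φ g v₀) (φ h v₀) ↔ X.Adj v₀ (φ (g⁻¹ * h) v₀) := by
  rw [← hφ g v₀, ← Perm.mul_apply, ← map_mul, mul_inv_cancel_left]

theorem apply_ne_self_of_bijective {V G : Type*} [Group G] {φ : G →* Perm V} {v₀ : V}
    (hbij : Bijective fun g => φ g v₀) {g : G} (hg : g ≠ 1) (v : V) : φ g v ≠ v := by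
  obtain ⟨h, rfl⟩ := hbij.2 v
  intro hgh
  apply hg
  simpa using @hbij.1 (g * h) h (by simpa only [map_mul, Perm.mul_apply] using hgh)

theorem hamiltonCompression_eq_card {V : Type*} [Fintype V] {X : SimpleGraph V}
    {c : ZMod (Fintype.card V) → V} (hc : IsHamCycle X c) {α : Perm V}
    (hα : α ∈ autSubgroup X) (hshift : ∀ i, α (c i) = c (i + 1)) :
    hamiltonCompression X = Fintype.card V := by
  have hpos : 0 < Fintype.card V := Fintype.card_pos_iff.mpr ⟨c 0⟩
  have hub : ∀ k ∈ {k | ∃ c, IsHamCycle X c ∧ IsSymmHamCycle X c k}, k ≤ Fintype.card V :=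
    fun k ⟨_, _, hk, _⟩ => Nat.le_of_dvd hpos hk
  have hmem : Fintype.card V ∈ {k | ∃ c, IsHamCycle X c ∧ IsSymmHamCycle X c k} :=
    ⟨c, hc, dvd_rfl, α, hα, by simpa [Nat.div_self hpos] using hshift⟩
  exact le_antisymm (csSup_le ⟨_, hmem⟩ hub) (le_csSup ⟨_, hub⟩ hmem)

theorem hamiltonCompression_eq_card_of_adj_isUnit {V : Type*} [Fintype V] {X : SimpleGraph V}
    {n : ℕ} (hn : Fintype.card V = n) {φ : Multiplicative (ZMod n) →* Perm V}
    (hφ : ∀ a, φ a ∈ autSubgroup X) {v₀ : V} (hbij : Bijective fun a => φ a v₀)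
    {s : ZMod n} (hs : IsUnit s) (hadj : X.Adj v₀ (φ (ofAdd s) v₀)) :
    hamiltonCompression X = Fintype.card V := by
  subst hn
  set c : ZMod (Fintype.card V) → V := fun i => φ (ofAdd (i * s)) v₀
  have hshift : ∀ i, φ (ofAdd s) (c i) = c (i + 1) := fun i => by
    simp only [c, ← Perm.mul_apply, ← map_mul, ← ofAdd_add]
    ring_nf
  refine hamiltonCompression_eq_card ⟨?_, fun i => ?_⟩ (hφ _) hshift
  · exact hbij.comp (ofAdd.bijective.comp hs.unit.mulRight_bijective)
  · have hcomm : φ (ofAdd s) (c i) = φ (ofAdd (i * s)) (φ (ofAdd s) v₀) := by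
      rw [← Perm.mul_apply, ← map_mul, mul_comm, map_mul, Perm.mul_apply]
    rw [← hshift, hcomm]
    exact (hφ _ _ _).mpr hadj

theorem ZMod.exists_eq_two_mul_or_isUnit_or_eq {p : ℕ} (hp : p.Prime) (s : ZMod (2 * p)) :
    (∃ k : ℕ, s = 2 * k) ∨ IsUnit s ∨ s = p := by
  have : NeZero (2 * p) := ⟨by have := hp.pos; omega⟩
  rw [← ZMod.natCast_zmod_val s]
  rcases Nat.even_or_odd s.val with ⟨k, hk⟩ | hodd
  · exact Or.inl ⟨k, by rw [hk]; push_cast; ring⟩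
  by_cases hps : p ∣ s.val
  · obtain ⟨m, hm⟩ := hps
    have hm1 : m = 1 := by
      have hlt := s.val_lt
      rw [hm] at hodd hlt
      obtain ⟨j, rfl⟩ := (Nat.odd_mul.mp hodd).2
      have : 2 * j + 1 < 2 := by nlinarith [hp.pos]
      omega
    exact Or.inr (Or.inr (by rw [hm, hm1, mul_one]))
  · refine Or.inr (Or.inl ((ZMod.isUnit_iff_coprime _ _).mpr (Nat.Coprime.mul_right ?_ ?_)))
    · exact Nat.coprime_two_right.mpr hodd
    · exact (hp.coprime_iff_not_dvd.mpr hps).symm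

theorem eq_apply_of_adj_of_not_sameCycle {V : Type*} {X : SimpleGraph V} {p : ℕ} (hp : p.Prime)
    {φ : Multiplicative (ZMod (2 * p)) →* Perm V} (hφ : ∀ a, φ a ∈ autSubgroup X) {v₀ : V}
    (hsurj : Surjective fun a => φ a v₀)
    (hunit : ∀ s : ZMod (2 * p), IsUnit s → ¬ X.Adj v₀ (φ (ofAdd s) v₀))
    {x y : V} (hxy : X.Adj x y) (hcycle : ¬ (φ (ofAdd 2)).SameCycle x y) :
    y = φ (ofAdd (p : ZMod (2 * p))) x := by
  obtain ⟨a, rfl⟩ := hsurj x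
  obtain ⟨s, rfl⟩ : ∃ s, y = φ (a * ofAdd s) v₀ :=
    let ⟨b, hb⟩ := hsurj y; ⟨toAdd (a⁻¹ * b), by rw [ofAdd_toAdd, mul_inv_cancel_left, ← hb]⟩
  rw [adj_apply_iff_adj_inv_mul_apply hφ, inv_mul_cancel_left] at hxy
  rcases ZMod.exists_eq_two_mul_or_isUnit_or_eq hp s with ⟨k, rfl⟩ | hs | rfl
  · refine absurd ⟨k, ?_⟩ hcycle
    rw [zpow_natCast, ← map_pow, ← Perm.mul_apply, ← map_mul, ← ofAdd_nsmul, nsmul_eq_mul,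
      mul_comm a, mul_comm (k : ZMod (2 * p))]
  · exact absurd hxy (hunit s hs)
  · rw [← Perm.mul_apply, ← map_mul, mul_comm a]

theorem SimpleGraph.Reachable.eq_or_eq_of_forall_adj {V : Type*} {Y : SimpleGraph V}
    {Φ : V → V} (hΦ : Involutive Φ) (hY : ∀ x y, Y.Adj x y → y = Φ x) {u w : V}
    (h : Y.Reachable u w) : w = u ∨ w = Φ u := by
  obtain ⟨q⟩ := h
  induction q with
  | nil => exact Or.inl rfl
  | cons hadj _ ih =>
    rcases ih with h | h <;> rw [hY _ _ hadj] at h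
    · exact Or.inr h
    · exact Or.inl (h.trans (hΦ _))

theorem SimpleGraph.Connected.card_le_two_of_forall_adj {V : Type*} [Fintype V]
    {Y : SimpleGraph V} (hconn : Y.Connected) {Φ : V → V} (hΦ : Involutive Φ)
    (hY : ∀ x y, Y.Adj x y → y = Φ x) : Fintype.card V ≤ 2 := by
  obtain ⟨u⟩ := hconn.nonempty
  refine (Fintype.card_le_of_surjective (fun b : Bool => if b then u else Φ u) fun w => ?_).trans
    (Fintype.card_bool).le
  rcases (hconn.preconnected u w).eq_or_eq_of_forall_adj hΦ hY with rfl | rfl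
  exacts [⟨true, rfl⟩, ⟨false, rfl⟩]

theorem exists_isUnit_adj_of_connected_delSubgraph {V : Type*} [Fintype V] {X : SimpleGraph V}
    {ρ : Perm V} {p : ℕ} (hp : p.Prime) (hp3 : 3 ≤ p) (hcard : Fintype.card V = 2 * p)
    (hρ : ρ ∈ autSubgroup X) (horb : ∀ v, {w | ∃ a : ℤ, (ρ ^ a) v = w}.ncard = p)
    (hconn : (delSubgraph X ρ).Connected) {φ : Multiplicative (ZMod (2 * p)) →* Perm V}
    (hφ : ∀ a, φ a ∈ autSubgroup X) {v₀ : V} (hbij : Bijective fun a => φ a v₀) :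
    ∃ s : ZMod (2 * p), IsUnit s ∧ X.Adj v₀ (φ (ofAdd s) v₀) := by
  by_contra! hunit
  have : Fact p.Prime := ⟨hp⟩
  have hV : Nat.card V < p ^ 2 := by rw [Nat.card_eq_fintype_card, hcard]; nlinarith
  have h2p : (2 : ZMod (2 * p)) * p = 0 := by exact_mod_cast ZMod.natCast_self (2 * p)
  have hT : φ (ofAdd 2) ^ p = 1 := by
    rw [← map_pow, ← ofAdd_nsmul, nsmul_eq_mul, mul_comm (p : ZMod (2 * p)), h2p, ofAdd_zero,
      map_one]
  have hTfix : ∀ v, φ (ofAdd 2) v ≠ v := by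
    refine apply_ne_self_of_bijective hbij fun h2 => ?_
    have hdvd := (ZMod.natCast_eq_zero_iff 2 (2 * p)).mp (by exact_mod_cast congrArg toAdd h2)
    have := Nat.le_of_dvd two_pos hdvd
    omega
  obtain ⟨g, hg, hgρ⟩ := exists_mem_sameCycle_iff_sameCycle_inv_apply hV hρ (hφ _)
    (ρ.pow_eq_one_of_ncard_sameCycle horb) hT
    (ρ.apply_ne_self_of_ncard_sameCycle hp.one_lt.ne' horb) hTfix
  set τ := φ (ofAdd (p : ZMod (2 * p)))
  have hτ : Involutive τ := fun v => by
    rw [← Perm.mul_apply, ← map_mul, ← ofAdd_add, ← two_mul, h2p, ofAdd_zero, map_one,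
      Perm.one_apply]
  have hΦ : Involutive (g * τ * g⁻¹) := fun v => by simp [hτ _]
  have hadj : ∀ x y, (delSubgraph X ρ).Adj x y → y = (g * τ * g⁻¹) x := by
    rintro x y ⟨hxy, hnot⟩
    have := eq_apply_of_adj_of_not_sameCycle hp hφ hbij.2 hunit
      (((autSubgroup X).inv_mem hg x y).mpr hxy) ((hgρ x y).not.mp hnot)
    rw [Perm.inv_eq_iff_eq] at this
    simpa using this
  have := hconn.card_le_two_of_forall_adj hΦ hadj
  omega

theorem stmt18_general {V : Type*} [Fintype V] (p : ℕ) (hp : p.Prime) (hodd : Odd p)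
    (X : SimpleGraph V) (ρ σ : Equiv.Perm V)
    (hmeta : IsMetacirculant X 2 p ρ σ)
    (htconn : (delSubgraph X ρ).Connected)
    (hcyc : IsCayleyOf X (Multiplicative (ZMod (2 * p)))) :
    hamiltonCompression X = 2 * p := by
  obtain ⟨hρ, -, hcard, horb, -⟩ := hmeta
  have hp3 : 3 ≤ p := by
    obtain ⟨k, rfl⟩ := hodd
    have := hp.two_le
    omega
  obtain ⟨v₀⟩ := htconn.nonempty
  obtain ⟨φ, hφ, hbij⟩ := hcyc.exists_monoidHom v₀
  obtain ⟨s, hs, hadj⟩ :=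
    exists_isUnit_adj_of_connected_delSubgraph hp hp3 hcard hρ horb htconn hφ hbij
  rw [hamiltonCompression_eq_card_of_adj_isUnit hcard hφ hbij hs hadj, hcard]

/-- Let `p` be an odd prime and `X` a connected `(2,p)`-metacirculant
relative to `(ρ,σ)`.  If `X̃(ρ)` is connected and `X` is simultaneously a Cayley
graph of the dihedral group of order `2p` and of the cyclic group of order `2p`,
then `κ(X) = 2p`. -/
theorem stmt18 {V : Type*} [Fintype V] (p : ℕ) (hp : p.Prime) (hodd : Odd p)
    (X : SimpleGraph V) (ρ σ : Equiv.Perm V)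
    (hmeta : IsMetacirculant X 2 p ρ σ) (hconn : X.Connected)
    (htconn : (delSubgraph X ρ).Connected)
    (hdih : IsCayleyOf X (DihedralGroup p))
    (hcyc : IsCayleyOf X (Multiplicative (ZMod (2 * p)))) :
    hamiltonCompression X = 2 * p :=
  stmt18_general p hp hodd X ρ σ hmeta htconn hcyc
end

section
/- The complement of the Petersen graph is hamiltonian and its Hamilton compression equals 5. -/
open SimpleGraph

/-- The Petersen graph: vertices are the 2-element subsets of a 5-element set, two
vertices adjacent iff the subsets are disjoint. -/
def petersenGraph : SimpleGraph {s : Finset (Fin 5) // s.card = 2} where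
  Adj a b := Disjoint (a : Finset (Fin 5)) (b : Finset (Fin 5))
  symm := ⟨fun a b h => h.symm⟩
  loopless := ⟨by
    rintro ⟨a, ha⟩ h
    simp only [disjoint_self] at h
    rw [h] at ha
    simp at ha⟩

/-!
A Hamilton cycle of the complement is listed explicitly, and the rotation `x ↦ x + 1` of the
ground set `Fin 5` moves it two steps along itself, so it is `5`-symmetric. A `10`-symmetric
Hamilton cycle would be moved one step by an automorphism, which is then also an automorphism of
the Petersen graph; hence the Petersen graph would be a circulant graph on `ℤ/10` with a
symmetric connection set `S` of odd size `3`. Negation on `S` then fixes some `b`, and with any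
other `a ∈ S` the vertices `0, a, a + b, b` form a `4`-cycle, which the Petersen graph (of girth
`5`) does not have.
-/

variable {V : Type*}

theorem autSubgroup_compl (X : SimpleGraph V) : autSubgroup Xᶜ = autSubgroup X := by
  ext π
  refine forall₂_congr fun u v => ?_
  by_cases huv : u = v
  · simp [huv]
  · simp [compl_adj, huv, π.injective.ne huv, not_iff_not]

/-- The remaining distinctness conditions of a `4`-cycle follow from looplessness. -/
def SimpleGraph.HasFourCycle (X : SimpleGraph V) : Prop :=
  ∃ u v w w', u ≠ v ∧ w ≠ w' ∧ X.Adj u w ∧ X.Adj w v ∧ X.Adj v w' ∧ X.Adj w' u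

theorem Finset.exists_neg_eq_self_of_odd_card {G : Type*} [InvolutiveNeg G] {S : Finset G}
    (hS : ∀ x ∈ S, -x ∈ S) (hodd : Odd S.card) : ∃ b ∈ S, -b = b := by
  let σ : Equiv.Perm S :=
    ⟨fun x => ⟨-x, hS x x.2⟩, fun x => ⟨-x, hS x x.2⟩, fun x => by simp, fun x => by simp⟩
  have hσ : σ ^ 2 ^ 1 = 1 := by
    ext x
    simp [σ, sq]
  have h2 : ¬ 2 ∣ Fintype.card S := by
    rwa [Fintype.card_coe, ← even_iff_two_dvd, Nat.not_even_iff_odd]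
  obtain ⟨⟨b, hb⟩, hfix⟩ := Equiv.Perm.exists_fixed_point_of_prime h2 hσ
  exact ⟨b, hb, congrArg Subtype.val hfix⟩

theorem exists_shift_of_isSymmHamCycle_card [Fintype V] {X : SimpleGraph V}
    {c : ZMod (Fintype.card V) → V} (h : IsSymmHamCycle X c (Fintype.card V)) :
    ∃ α ∈ autSubgroup X, ∀ i, α (c i) = c (i + 1) := by
  obtain ⟨-, α, hα, hshift⟩ := h
  rw [Nat.div_self (Fintype.card_pos_iff.2 ⟨c 0⟩), Nat.cast_one] at hshift
  exact ⟨α, hα, hshift⟩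

section Circulant

variable {n : ℕ} {X : SimpleGraph V} {c : ZMod n → V} {α : Equiv.Perm V}

theorem pow_apply_of_shift_s19 (hc : ∀ i, α (c i) = c (i + 1)) (t : ℕ) (i : ZMod n) :
    (α ^ t) (c i) = c (i + t) := by
  induction t generalizing i with
  | zero => simp
  | succ t ih =>
    rw [pow_succ', Equiv.Perm.mul_apply, ih, hc, Nat.cast_succ, add_assoc]

variable [NeZero n]

theorem adj_iff_adj_zero_sub (hα : α ∈ autSubgroup X) (hc : ∀ i, α (c i) = c (i + 1))
    (i j : ZMod n) : X.Adj (c i) (c j) ↔ X.Adj (c 0) (c (j - i)) := by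
  have h := pow_mem hα i.val (c 0) (c (j - i))
  rwa [pow_apply_of_shift_s19 hc, pow_apply_of_shift_s19 hc, ZMod.natCast_zmod_val, zero_add,
    sub_add_cancel] at h

theorem hasFourCycle_of_shift [Fintype V] [DecidableRel X.Adj] {d : ℕ}
    (hreg : X.IsRegularOfDegree d) (hodd : Odd d) (hd : 1 < d) (hbij : Function.Bijective c)
    (hα : α ∈ autSubgroup X) (hc : ∀ i, α (c i) = c (i + 1)) : X.HasFourCycle := by
  classical
  set S := Finset.univ.filter fun j => X.Adj (c 0) (c j)
  have hmem : ∀ j, j ∈ S ↔ X.Adj (c 0) (c j) := by simp [S]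
  have hcard : S.card = d := by
    rw [← hreg (c 0), ← card_neighborFinset_eq_degree]
    refine Finset.card_nbij c (fun j hj => by simpa [hmem] using hj) hbij.injective.injOn
      fun v hv => ?_
    obtain ⟨j, rfl⟩ := hbij.surjective v
    exact ⟨j, by simpa [hmem] using hv, rfl⟩
  have hadj : ∀ i j, j - i ∈ S → X.Adj (c i) (c j) := fun i j h =>
    (adj_iff_adj_zero_sub hα hc i j).2 ((hmem _).1 h)
  have hneg : ∀ j ∈ S, -j ∈ S := fun j hj => by
    rw [hmem] at hj ⊢
    simpa using (adj_iff_adj_zero_sub hα hc j 0).1 hj.symm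
  obtain ⟨b, hbS, hb⟩ := Finset.exists_neg_eq_self_of_odd_card hneg (hcard ▸ hodd)
  obtain ⟨a, haS, hab⟩ := Finset.exists_mem_ne (hcard ▸ hd) b
  have hab0 : a + b ≠ 0 := fun h => hab (by rw [← hb, ← add_eq_zero_iff_eq_neg.1 h])
  refine ⟨c 0, c (a + b), c a, c b, hbij.injective.ne hab0.symm, hbij.injective.ne hab,
    hadj _ _ ?_, hadj _ _ ?_, hadj _ _ ?_, hadj _ _ ?_⟩
  · rwa [sub_zero]
  · rwa [add_sub_cancel_left]
  · rw [show b - (a + b) = -a by abel]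
    exact hneg a haS
  · rwa [zero_sub, hb]

end Circulant

abbrev PetersenVertex := {s : Finset (Fin 5) // s.card = 2}

instance : DecidableRel petersenGraph.Adj := fun a b =>
  inferInstanceAs (Decidable (Disjoint (a : Finset (Fin 5)) (b : Finset (Fin 5))))

theorem petersenGraph_isRegularOfDegree_three : petersenGraph.IsRegularOfDegree 3 := by
  unfold IsRegularOfDegree
  decide

theorem not_hasFourCycle_petersenGraph : ¬ petersenGraph.HasFourCycle := by
  unfold SimpleGraph.HasFourCycle
  decide

def petersenPerm (σ : Equiv.Perm (Fin 5)) : Equiv.Perm PetersenVertex :=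
  σ.finsetCongr.subtypeEquiv fun s => by simp [Equiv.finsetCongr_apply]

theorem petersenPerm_mem_autSubgroup (σ : Equiv.Perm (Fin 5)) :
    petersenPerm σ ∈ autSubgroup petersenGraph := fun _ _ => Finset.disjoint_map _

def petersenPair (a b : Fin 5) (h : ({a, b} : Finset (Fin 5)).card = 2 := by decide) :
    PetersenVertex :=
  ⟨{a, b}, h⟩

def petersenComplHamCycle : ZMod 10 → PetersenVertex :=
  ![petersenPair 0 1, petersenPair 0 2, petersenPair 1 2, petersenPair 1 3, petersenPair 2 3,
    petersenPair 2 4, petersenPair 3 4, petersenPair 3 0, petersenPair 4 0, petersenPair 4 1]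

theorem isHamCycle_petersenComplHamCycle : IsHamCycle petersenGraphᶜ petersenComplHamCycle :=
  show Function.Bijective petersenComplHamCycle ∧
    ∀ i : ZMod 10, petersenGraphᶜ.Adj (petersenComplHamCycle i) (petersenComplHamCycle (i + 1))
  by decide

theorem isSymmHamCycle_petersenComplHamCycle_five :
    IsSymmHamCycle petersenGraphᶜ petersenComplHamCycle 5 := by
  refine ⟨by decide, petersenPerm (Equiv.addRight 1), ?_, ?_⟩
  · rw [autSubgroup_compl]
    exact petersenPerm_mem_autSubgroup _
  · show ∀ i : ZMod 10, petersenPerm (Equiv.addRight 1) (petersenComplHamCycle i) =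
      petersenComplHamCycle (i + (2 : ℕ))
    decide

theorem not_isSymmHamCycle_petersenGraph_compl_ten (c : ZMod 10 → PetersenVertex)
    (hc : IsHamCycle petersenGraphᶜ c) : ¬ IsSymmHamCycle petersenGraphᶜ c 10 := by
  intro h
  obtain ⟨α, hα, hshift⟩ := exists_shift_of_isSymmHamCycle_card h
  rw [autSubgroup_compl] at hα
  exact not_hasFourCycle_petersenGraph <| hasFourCycle_of_shift
    petersenGraph_isRegularOfDegree_three (by decide) (by decide) hc.1 hα hshift

/-- The complement of the Petersen graph is hamiltonian and its
Hamilton compression equals `5`. -/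
theorem stmt19 :
    (∃ c, IsHamCycle petersenGraphᶜ c) ∧ hamiltonCompression petersenGraphᶜ = 5 := by
  refine ⟨⟨_, isHamCycle_petersenComplHamCycle⟩, IsGreatest.csSup_eq
    ⟨⟨_, isHamCycle_petersenComplHamCycle, isSymmHamCycle_petersenComplHamCycle_five⟩, ?_⟩⟩
  rintro k ⟨c, hc, hk⟩
  have hk10 : k ≠ 10 := by
    rintro rfl
    exact not_isSymmHamCycle_petersenGraph_compl_ten c hc hk
  have hdiv : k ∈ Nat.divisors 10 := Nat.mem_divisors.2 ⟨hk.1, by norm_num⟩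
  rw [show Nat.divisors 10 = {1, 2, 5, 10} by decide] at hdiv
  simp only [Finset.mem_insert, Finset.mem_singleton] at hdiv
  omega
end
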